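/- arXiv:2106.10978 — 5 statements merged into one kernel-verified Lean document; each statement's English description precedes it below -/
import Mathlib

section
/- Let (S,T,E) be a bipartite graph and let K = (S, T, (S×T)\E) be the formal context whose incidence relation is the complement of the edge relation. For subsets H ⊆ S and N ⊆ T, the set of edges between H and N forms an induced matching of size k in (S,T,E) if and only if the subcontext K[H,N] is a contranominal scale of dimension k. -/
/-- `K[H,N]` is a contranominal scale of dimension `k` in the context with incidence `I`. -/
def IsContranominal {G M : Type*} (I : G → M → Prop) (H : Set G) (N : Set M) (k : ℕ) : Prop :=
  ∃ (h : Fin k → G) (n : Fin k → M), Function.Injective h ∧ Function.Injective n ∧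
    Set.range h = H ∧ Set.range n = N ∧ ∀ i j, I (h i) (n j) ↔ i ≠ j

/-- The set of edges of the bipartite graph `(S,T,E)` lying between `H` and `N`. -/
def edgesBetween {S T : Type*} (E : S → T → Prop) (H : Set S) (N : Set T) : Set (S × T) :=
  {p | p.1 ∈ H ∧ p.2 ∈ N ∧ E p.1 p.2}

/-- The edges between `H` and `N` form an induced matching of size `k`
(pairwise disjoint, no `E`-edge between endpoints of two distinct matching edges,
and covering all of `H ∪ N`). -/
def IsInducedMatchingBetween {S T : Type*} (E : S → T → Prop) (H : Set S) (N : Set T)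
    (k : ℕ) : Prop :=
  (edgesBetween E H N).Finite ∧ (edgesBetween E H N).ncard = k ∧
    (∀ p ∈ edgesBetween E H N, ∀ q ∈ edgesBetween E H N, p ≠ q →
      p.1 ≠ q.1 ∧ p.2 ≠ q.2 ∧ ¬E p.1 q.2) ∧
    (∀ s ∈ H, ∃ t ∈ N, E s t) ∧ (∀ t ∈ N, ∃ s ∈ H, E s t)

/-- Lemma 1: for the formal context `K = (S, T, (S×T)\E)`, the edges between `H` and `N`
form an induced matching of size `k` in `(S,T,E)` iff `K[H,N]` is a contranominal scale
of dimension `k`. -/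
theorem inducedMatching_iff_contranominal {S T : Type*} (E : S → T → Prop)
    (H : Set S) (N : Set T) (k : ℕ) :
    IsInducedMatchingBetween E H N k ↔ IsContranominal (fun s t => ¬E s t) H N k := by
  constructor
  · rintro ⟨hfin, hcard, hind, hcovH, hcovN⟩
    have hcard' : hfin.toFinset.card = k := by
      rw [← hcard]; exact (Set.ncard_eq_toFinset_card _ hfin).symm
    let e : Fin k ≃ hfin.toFinset := (Finset.equivFinOfCardEq hcard').symm
    have hmem : ∀ i : Fin k, ((e i : S × T)) ∈ edgesBetween E H N := fun i => by
      have := (e i).2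
      rwa [Set.Finite.mem_toFinset] at this
    refine ⟨fun i => (e i : S × T).1, fun i => (e i : S × T).2, ?_, ?_, ?_, ?_, ?_⟩
    · intro i j hij
      by_contra hne
      have hpq : (e i : S × T) ≠ (e j : S × T) := by
        intro hval
        exact hne (e.injective (Subtype.ext hval))
      exact (hind _ (hmem i) _ (hmem j) hpq).1 hij
    · intro i j hij
      by_contra hne
      have hpq : (e i : S × T) ≠ (e j : S × T) := by
        intro hval
        exact hne (e.injective (Subtype.ext hval))
      exact (hind _ (hmem i) _ (hmem j) hpq).2.1 hij
    · ext s
      constructor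
      · rintro ⟨i, rfl⟩
        exact (hmem i).1
      · intro hs
        obtain ⟨t, htN, hst⟩ := hcovH s hs
        have hedge : (s, t) ∈ hfin.toFinset := by
          rw [Set.Finite.mem_toFinset]; exact ⟨hs, htN, hst⟩
        exact ⟨e.symm ⟨(s, t), hedge⟩, by simp [e.apply_symm_apply]⟩
    · ext t
      constructor
      · rintro ⟨i, rfl⟩
        exact (hmem i).2.1
      · intro ht
        obtain ⟨s, hsH, hst⟩ := hcovN t ht
        have hedge : (s, t) ∈ hfin.toFinset := by
          rw [Set.Finite.mem_toFinset]; exact ⟨hsH, ht, hst⟩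
        exact ⟨e.symm ⟨(s, t), hedge⟩, by simp [e.apply_symm_apply]⟩
    · intro i j
      constructor
      · intro hnE
        intro hij
        subst hij
        exact hnE (hmem i).2.2
      · intro hij
        have hpq : (e i : S × T) ≠ (e j : S × T) := by
          intro hval
          exact hij (e.injective (Subtype.ext hval))
        exact (hind _ (hmem i) _ (hmem j) hpq).2.2
  · rintro ⟨h, n, hinj, ninj, hH, hN, hI⟩
    have hE : ∀ i j, E (h i) (n j) ↔ i = j := by
      intro i j
      exact not_iff_not.mp (hI i j)
    have hset : edgesBetween E H N = Set.range (fun i => (h i, n i)) := by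
      ext p
      constructor
      · rintro ⟨hp1, hp2, hpE⟩
        rw [← hH] at hp1
        rw [← hN] at hp2
        obtain ⟨i, hi⟩ := hp1
        obtain ⟨j, hj⟩ := hp2
        have : E (h i) (n j) := by rw [hi, hj]; exact hpE
        have hij := (hE i j).1 this
        subst hij
        exact ⟨i, Prod.ext hi hj⟩
      · rintro ⟨i, rfl⟩
        exact ⟨hH ▸ Set.mem_range_self i, hN ▸ Set.mem_range_self i, (hE i i).2 rfl⟩
    have hfinj : Function.Injective (fun i : Fin k => (h i, n i)) := by
      intro i j hij
      exact hinj (congrArg Prod.fst hij)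
    refine ⟨?_, ?_, ?_, ?_, ?_⟩
    · rw [hset]; exact Set.finite_range _
    · rw [hset, ← Set.image_univ, Set.ncard_image_of_injective _ hfinj,
        Set.ncard_univ, Nat.card_eq_fintype_card, Fintype.card_fin]
    · intro p hp q hq hpq
      rw [hset] at hp hq
      obtain ⟨i, rfl⟩ := hp
      obtain ⟨j, rfl⟩ := hq
      have hij : i ≠ j := fun hij => hpq (by rw [hij])
      exact ⟨fun hc => hij (hinj hc), fun hc => hij (ninj hc), (hI i j).2 hij⟩
    · intro s hs
      rw [← hH] at hs
      obtain ⟨i, rfl⟩ := hs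
      exact ⟨n i, hN ▸ Set.mem_range_self i, (hE i i).2 rfl⟩
    · intro t ht
      rw [← hN] at ht
      obtain ⟨i, rfl⟩ := ht
      exact ⟨h i, hH ▸ Set.mem_range_self i, (hE i i).2 rfl⟩
end

section
/- Let K = (G,M,I) be a formal context, N ⊆ M, and define the set of characterizing tuples C(N) = {(g,m) ∉ I : g ∈ G, m ∈ N, and for all x ∈ N\{m}, (g,x) ∈ I}. For m ∈ N let H(m) = {g ∈ G : (g,m) ∈ C(N)}. Then for O ⊆ G, the subcontext K[O,N] is a contranominal scale if and only if O contains exactly one element of each H(m) for m ∈ N, and no further elements. -/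
/-- `H(m)` for `m ∈ N`: objects `g` with `(g,m) ∈ C(N)`, i.e. `(g,m) ∉ I` and
`(g,x) ∈ I` for all `x ∈ N \ {m}`. -/
def charObjects {G M : Type*} (I : G → M → Prop) (N : Set M) (m : M) : Set G :=
  {g | ¬I g m ∧ ∀ x ∈ N, x ≠ m → I g x}

/-- Lemma 3: for `O ⊆ G`, the subcontext `K[O,N]` is a contranominal scale iff `O`
contains exactly one element of each `H(m)` for `m ∈ N`, and no further elements. -/
theorem contranominal_iff_one_of_each {G M : Type*} [Fintype G] [Fintype M]
    (I : G → M → Prop) (N : Set M) (O : Set G) :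
    (∃ k : ℕ, IsContranominal I O N k) ↔
      (∀ m ∈ N, ∃! g, g ∈ O ∧ g ∈ charObjects I N m) ∧
        (∀ g ∈ O, ∃ m ∈ N, g ∈ charObjects I N m) := by
  classical
  constructor
  · rintro ⟨k, h, n, hinj, ninj, hH, hN, hI⟩
    constructor
    · intro m hm
      rw [← hN] at hm
      obtain ⟨i, rfl⟩ := hm
      refine ⟨h i, ⟨?_, ?_, ?_⟩, ?_⟩
      · rw [← hH]; exact ⟨i, rfl⟩
      · intro hi; exact (hI i i).mp hi rfl
      · intro x hx hne
        rw [← hN] at hx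
        obtain ⟨j, rfl⟩ := hx
        exact (hI i j).mpr (fun e => hne (by rw [e]))
      · rintro g ⟨hgO, hnI, hall⟩
        rw [← hH] at hgO
        obtain ⟨j, rfl⟩ := hgO
        by_contra hne'
        have hji : j ≠ i := fun e => hne' (by rw [e])
        exact hnI ((hI j i).mpr hji)
    · intro g hg
      rw [← hH] at hg
      obtain ⟨i, rfl⟩ := hg
      refine ⟨n i, by rw [← hN]; exact ⟨i, rfl⟩, ?_, ?_⟩
      · intro hi; exact (hI i i).mp hi rfl
      · intro x hx hne
        rw [← hN] at hx
        obtain ⟨j, rfl⟩ := hx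
        exact (hI i j).mpr fun e => hne (by rw [e])
  · rintro ⟨huniq, hall⟩
    have disj : ∀ m ∈ N, ∀ g, g ∈ charObjects I N m →
        ∀ m' ∈ N, g ∈ charObjects I N m' → m = m' := by
      rintro m hm g ⟨h1, h2⟩ m' hm' ⟨h1', h2'⟩
      by_contra hne
      exact h1' (h2 m' hm' (fun e => hne e.symm))
    set f : N → G := fun m => (huniq m.1 m.2).choose with hf
    have hfspec : ∀ m : N, f m ∈ O ∧ f m ∈ charObjects I N m.1 :=
      fun m => (huniq m.1 m.2).choose_spec.1
    have hfu : ∀ (m : N) (g : G), g ∈ O → g ∈ charObjects I N m.1 → g = f m :=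
      fun m g h1 h2 => (huniq m.1 m.2).choose_spec.2 g ⟨h1, h2⟩
    set k := Fintype.card N with hk
    set e : Fin k ≃ N := (Fintype.equivFin N).symm with he
    refine ⟨k, fun i => f (e i), fun i => (e i : M), ?_, ?_, ?_, ?_, ?_⟩
    · intro i j hij
      simp only at hij
      have h2 : f (e i) ∈ charObjects I N (e j : M) := by
        rw [hij]; exact (hfspec (e j)).2
      have hm : (e i : M) = (e j : M) :=
        disj _ (e i).2 _ (hfspec (e i)).2 _ (e j).2 h2
      exact e.injective (Subtype.ext hm)
    · intro i j hij
      exact e.injective (Subtype.ext hij)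
    · ext g
      constructor
      · rintro ⟨i, rfl⟩; exact (hfspec (e i)).1
      · intro hg
        obtain ⟨m, hm, hgm⟩ := hall g hg
        refine ⟨e.symm ⟨m, hm⟩, ?_⟩
        simp only [Equiv.apply_symm_apply]
        exact (hfu ⟨m, hm⟩ g hg hgm).symm
    · ext m
      constructor
      · rintro ⟨i, rfl⟩; exact (e i).2
      · intro hm
        exact ⟨e.symm ⟨m, hm⟩, by simp only [Equiv.apply_symm_apply]⟩
    · intro i j
      constructor
      · intro hIij hij
        subst hij
        exact (hfspec (e i)).2.1 hIij
      · intro hij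
        have hne : (e j : M) ≠ (e i : M) := fun hmm =>
          hij (e.injective (Subtype.ext hmm)).symm
        exact (hfspec (e i)).2.2 _ (e j).2 hne
end

section
/- Let K = (G,M,I) be a formal context, k ∈ ℕ, and let S = K[H_S, N_S] be the (k−1,k−1)-core of K. Then every contranominal scale C ≤ K of dimension k satisfies C ≤ S; that is, all objects and attributes of C lie in H_S and N_S respectively. -/
/-- The degree conditions of a `(p,q)`-core: within `K[H,N]` every object has at least
`p` incidences and every attribute has at least `q` incidences. -/
def CoreCond {G M : Type*} (I : G → M → Prop) (p q : ℕ) (H : Set G) (N : Set M) : Prop :=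
  (∀ g ∈ H, p ≤ {n ∈ N | I g n}.ncard) ∧ (∀ n ∈ N, q ≤ {g ∈ H | I g n}.ncard)

/-- `K[H,N]` is the `(p,q)`-core of `K`: it satisfies the degree conditions and is
maximal with respect to them. -/
def IsPQCore {G M : Type*} (I : G → M → Prop) (p q : ℕ) (H : Set G) (N : Set M) : Prop :=
  CoreCond I p q H N ∧
    ∀ (H' : Set G) (N' : Set M), H ⊆ H' → N ⊆ N' → CoreCond I p q H' N' → H' = H ∧ N' = N

/-- Lemma 6: every contranominal scale of dimension `k` is contained in the
`(k-1,k-1)`-core of `K`. -/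
theorem contranominal_subset_core {G M : Type*} [Fintype G] [Fintype M]
    (I : G → M → Prop) (k : ℕ) (HS : Set G) (NS : Set M)
    (hcore : IsPQCore I (k - 1) (k - 1) HS NS)
    (H : Set G) (N : Set M) (h : IsContranominal I H N k) :
    H ⊆ HS ∧ N ⊆ NS := by
  obtain ⟨f, n, injf, injn, hrf, hrn, hI⟩ := h
  have hk : ∀ (i : Fin k), k - 1 ≤ ({j : Fin k | j ≠ i} : Set (Fin k)).ncard := by
    intro i
    have : ({j : Fin k | j ≠ i} : Set (Fin k)) = Set.univ \ {i} := by
      ext j; simp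
    rw [this, Set.ncard_diff_singleton_of_mem (Set.mem_univ i), Set.ncard_univ]
    simp
  have hcc : CoreCond I (k-1) (k-1) (H ∪ HS) (N ∪ NS) := by
    constructor
    · intro g hg
      rcases hg with hg | hg
      · rw [← hrf] at hg
        obtain ⟨i, rfl⟩ := hg
        have hsub : n '' {j | j ≠ i} ⊆ {m ∈ N ∪ NS | I (f i) m} := by
          rintro m ⟨j, hj, rfl⟩
          exact ⟨Or.inl (hrn ▸ Set.mem_range_self j), (hI i j).2 (Ne.symm hj)⟩
        calc k - 1 ≤ ({j : Fin k | j ≠ i} : Set (Fin k)).ncard := hk i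
          _ = (n '' {j | j ≠ i}).ncard := (Set.ncard_image_of_injective _ injn).symm
          _ ≤ _ := Set.ncard_le_ncard hsub (Set.toFinite _)
      · calc k - 1 ≤ {m ∈ NS | I g m}.ncard := hcore.1.1 g hg
          _ ≤ {m ∈ N ∪ NS | I g m}.ncard :=
            Set.ncard_le_ncard (fun m hm => ⟨Or.inr hm.1, hm.2⟩) (Set.toFinite _)
    · intro m hm
      rcases hm with hm | hm
      · rw [← hrn] at hm
        obtain ⟨j, rfl⟩ := hm
        have hsub : f '' {i | i ≠ j} ⊆ {g ∈ H ∪ HS | I g (n j)} := by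
          rintro g ⟨i, hi, rfl⟩
          exact ⟨Or.inl (hrf ▸ Set.mem_range_self i), (hI i j).2 hi⟩
        calc k - 1 ≤ ({i : Fin k | i ≠ j} : Set (Fin k)).ncard := hk j
          _ = (f '' {i | i ≠ j}).ncard := (Set.ncard_image_of_injective _ injf).symm
          _ ≤ _ := Set.ncard_le_ncard hsub (Set.toFinite _)
      · calc k - 1 ≤ {g ∈ HS | I g m}.ncard := hcore.1.2 m hm
          _ ≤ {g ∈ H ∪ HS | I g m}.ncard :=
            Set.ncard_le_ncard (fun g hg => ⟨Or.inr hg.1, hg.2⟩) (Set.toFinite _)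
  obtain ⟨hH, hN⟩ := hcore.2 (H ∪ HS) (N ∪ NS) Set.subset_union_right Set.subset_union_right hcc
  exact ⟨hH ▸ Set.subset_union_left, hN ▸ Set.subset_union_left⟩
end

section
/- Let K = (G,M,I) be a formal context and m ∈ M a reducible attribute, i.e., there exists X ⊆ M with m ∉ X and m' = X'. Then for every contranominal scale K[H,N] of K with m ∈ N, there exists an attribute y ∈ X with y ∉ N such that K[H, (N\{m}) ∪ {y}] is also a contranominal scale of K of the same dimension. -/
/-- Derivation of an attribute set: the objects incident to all attributes in `B`. -/
def extent {G M : Type*} (I : G → M → Prop) (B : Set M) : Set G :=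
  {g | ∀ m ∈ B, I g m}

/-- Let `m` be a reducible attribute, witnessed by `X ⊆ M` with `m ∉ X` and `m' = X'`.
Then for every contranominal scale `K[H,N]` of `K` with `m ∈ N` there is an attribute
`y ∈ X` with `y ∉ N` such that `K[H, (N\{m}) ∪ {y}]` is also a contranominal scale of
the same dimension. -/
theorem reducible_attribute_replacement {G M : Type*} (I : G → M → Prop)
    (m : M) (X : Set M) (hmX : m ∉ X) (hred : extent I X = extent I {m})
    (H : Set G) (N : Set M) (k : ℕ) (hm : m ∈ N) (h : IsContranominal I H N k) :
    ∃ y ∈ X, y ∉ N ∧ IsContranominal I H ((N \ {m}) ∪ {y}) k := by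
  obtain ⟨hf, nf, hinj, ninj, hran, nran, hI⟩ := h
  -- m = nf j₀ for some j₀
  rw [← nran] at hm
  obtain ⟨j₀, hj₀⟩ := hm
  -- hf j₀ is not in m' = X', so there is y ∈ X with ¬ I (hf j₀) y
  have hnotm : ¬ I (hf j₀) m := by
    rw [← hj₀]; simpa using (hI j₀ j₀).not.mpr (by simp)
  have hnotX : hf j₀ ∉ extent I X := by
    rw [hred]
    intro hmem
    exact hnotm (hmem m rfl)
  obtain ⟨y, hyX, hy⟩ : ∃ y ∈ X, ¬ I (hf j₀) y := by
    by_contra hc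
    push_neg at hc
    exact hnotX hc
  -- other objects are incident to y
  have hIy : ∀ i, I (hf i) y ↔ i ≠ j₀ := by
    intro i
    constructor
    · intro hIi hij; exact hy (hij ▸ hIi)
    · intro hij
      have : hf i ∈ extent I {m} := by
        intro a ha
        rcases ha with rfl
        rw [← hj₀]
        exact (hI i j₀).mpr hij
      rw [← hred] at this
      exact this y hyX
  have hym : y ≠ m := fun hh => hmX (hh ▸ hyX)
  have hyN : y ∉ N := by
    rw [← nran]
    rintro ⟨j, rfl⟩
    by_cases hjj : j = j₀
    · exact hym (hjj ▸ hj₀)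
    · exact hy ((hI j₀ j).mpr (Ne.symm hjj))
  refine ⟨y, hyX, hyN, hf, fun j => if j = j₀ then y else nf j, hinj, ?_, hran, ?_, ?_⟩
  · intro a b hab
    by_cases ha : a = j₀ <;> by_cases hb : b = j₀ <;> simp [ha, hb] at hab ⊢
    · exact absurd (hab ▸ (nran ▸ Set.mem_range_self b)) hyN
    · exact absurd (hab ▸ (nran ▸ Set.mem_range_self a)) hyN
    · exact ninj hab
  · ext x
    simp only [Set.mem_range, Set.mem_union, Set.mem_diff, Set.mem_singleton_iff]
    constructor
    · rintro ⟨j, rfl⟩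
      by_cases hjj : j = j₀
      · simp [hjj]
      · simp only [hjj, if_false]
        left
        refine ⟨nran ▸ Set.mem_range_self j, fun hh => ?_⟩
        exact hjj (ninj (hh.trans hj₀.symm))
    · rintro (⟨hxN, hxm⟩ | rfl)
      · rw [← nran] at hxN
        obtain ⟨j, rfl⟩ := hxN
        have hjj : j ≠ j₀ := fun hh => hxm (hh ▸ hj₀)
        exact ⟨j, by simp [hjj]⟩
      · exact ⟨j₀, by simp⟩
  · intro i j
    by_cases hjj : j = j₀
    · subst hjj; simpa using hIy i
    · simp [hjj, hI i j]
end

section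
/- The number of formal concepts of a formal context K = (G,M,I) is at least 2^k, where k is the maximal dimension of a contranominal scale contained in K as a subcontext. -/
section Contranominal

variable {ι G M : Type*} {r : G → M → Prop} {h : ι → G} {n : ι → M}

theorem mem_lowerPolar_image_iff_notMem (hrel : ∀ i j, r (h i) (n j) ↔ i ≠ j)
    (S : Set ι) (i : ι) : h i ∈ lowerPolar r (n '' S) ↔ i ∉ S := by
  simp only [mem_lowerPolar_iff, Set.forall_mem_image, hrel]
  exact ⟨fun hS hi => hS hi rfl, fun hi j hj hij => hi (hij ▸ hj)⟩

theorem injective_ofAttributes_image (hrel : ∀ i j, r (h i) (n j) ↔ i ≠ j) :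
    Function.Injective fun S : Set ι => Concept.ofAttributes r (n '' S) := by
  intro S T hST
  have hext : lowerPolar r (n '' S) = lowerPolar r (n '' T) := congrArg Concept.extent hST
  ext i
  rw [← not_iff_not, ← mem_lowerPolar_image_iff_notMem hrel, hext,
    mem_lowerPolar_image_iff_notMem hrel]

end Contranominal

theorem IsContranominal.two_pow_le_card_concept {G M : Type*} [Finite G] {r : G → M → Prop}
    {H : Set G} {N : Set M} {k : ℕ} (hHN : IsContranominal r H N k) :
    2 ^ k ≤ Nat.card (Concept G M r) := by
  obtain ⟨h, n, -, -, -, -, hrel⟩ := hHN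
  have : Finite (Concept G M r) := .of_injective _ Concept.extent_injective
  calc 2 ^ k = Nat.card (Set (Fin k)) := by simp
    _ ≤ Nat.card (Concept G M r) :=
      Nat.card_le_card_of_injective _ (injective_ofAttributes_image hrel)

theorem card_concepts_ge_two_pow_general {G M : Type*} [Finite G]
    (r : G → M → Prop) (k : ℕ)
    (hex : ∃ H N, IsContranominal r H N k) :
    2 ^ k ≤ Nat.card (Concept G M r) := by
  obtain ⟨H, N, hHN⟩ := hex
  exact hHN.two_pow_le_card_concept

/-- The number of formal concepts of a finite formal context is at least `2^k`, where
`k` is the maximal dimension of a contranominal scale contained in it. -/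
theorem card_concepts_ge_two_pow {G M : Type*} [Finite G] [Finite M]
    (r : G → M → Prop) (k : ℕ)
    (hex : ∃ H N, IsContranominal r H N k)
    (hmax : ∀ (j : ℕ) (H : Set G) (N : Set M), IsContranominal r H N j → j ≤ k) :
    2 ^ k ≤ Nat.card (Concept G M r) :=
  card_concepts_ge_two_pow_general r k hex
end
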